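/- arXiv:0911.0938 — 2 statements merged into one kernel-verified Lean document; each statement's English description precedes it below -/
import Mathlib

section
/- Let g and h be finite-order linear automorphisms of a finite dimensional complex inner product space V acting by isometries. If (V^g)^⊥ ∩ (V^h)^⊥ = {0}, then codim V^{gh} = codim V^g + codim V^h. -/
/-!
An isometry `k` moves every vector orthogonally to its fixed space: `x - k x ∈ (V^k)ᗮ`.
If `g (h x) = x`, then `h x - x = h x - g (h x)` lies in `(V^g)ᗮ` and in `(V^h)ᗮ`, so it vanishes;
hence `V^{gh} = V^g ⊓ V^h`. Moreover `(V^g ⊔ V^h)ᗮ = (V^g)ᗮ ⊓ (V^h)ᗮ = ⊥` gives `V^g ⊔ V^h = V`,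
and for two subspaces spanning `V` the codimension of the intersection is the sum of the
codimensions.
-/

open Module

section FixedSpace

variable {𝕜 V : Type*} [RCLike 𝕜] [NormedAddCommGroup V] [InnerProductSpace 𝕜 V]

theorem sub_apply_mem_orthogonal_eqLocus_one (k : V →ₗ[𝕜] V)
    (hk : ∀ x y : V, inner 𝕜 (k x) (k y) = inner 𝕜 x y) (x : V) :
    x - k x ∈ (LinearMap.eqLocus k 1)ᗮ := by
  intro y (hy : k y = y)
  have hyk : inner 𝕜 y (k x) = inner 𝕜 y x := by
    conv_lhs => rw [← hy]
    exact hk y x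
  simp [inner_sub_right, hyk]

theorem eqLocus_mul_one_eq_inf (g h : V →ₗ[𝕜] V)
    (hg : ∀ x y : V, inner 𝕜 (g x) (g y) = inner 𝕜 x y)
    (hh : ∀ x y : V, inner 𝕜 (h x) (h y) = inner 𝕜 x y)
    (hdisj : Disjoint (LinearMap.eqLocus g 1)ᗮ (LinearMap.eqLocus h 1)ᗮ) :
    LinearMap.eqLocus (g * h) 1 = LinearMap.eqLocus g 1 ⊓ LinearMap.eqLocus h 1 := by
  apply le_antisymm
  · intro x (hx : g (h x) = x)
    have hG : h x - x ∈ (LinearMap.eqLocus g 1)ᗮ := by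
      simpa [hx] using sub_apply_mem_orthogonal_eqLocus_one g hg (h x)
    have hH : h x - x ∈ (LinearMap.eqLocus h 1)ᗮ := by
      simpa using Submodule.neg_mem _ (sub_apply_mem_orthogonal_eqLocus_one h hh x)
    have hhx : h x = x := sub_eq_zero.mp (Submodule.disjoint_def.mp hdisj _ hG hH)
    exact ⟨by simpa [hhx] using hx, hhx⟩
  · rintro x ⟨hxg : g x = x, hxh : h x = x⟩
    show g (h x) = x
    rw [hxh, hxg]

theorem Submodule.sup_eq_top_of_disjoint_orthogonal [FiniteDimensional 𝕜 V]
    {G H : Submodule 𝕜 V} (hdisj : Disjoint Gᗮ Hᗮ) : G ⊔ H = ⊤ := by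
  rw [← Submodule.orthogonal_eq_bot_iff, ← Submodule.inf_orthogonal]
  exact hdisj.eq_bot

end FixedSpace

theorem Submodule.finrank_sub_finrank_inf_of_sup_eq_top {K W : Type*} [DivisionRing K]
    [AddCommGroup W] [Module K W] [FiniteDimensional K W] {G H : Submodule K W}
    (hsup : G ⊔ H = ⊤) :
    finrank K W - finrank K ↥(G ⊓ H) =
      (finrank K W - finrank K G) + (finrank K W - finrank K H) := by
  have hdim := Submodule.finrank_sup_add_finrank_inf_eq G H
  rw [hsup, finrank_top] at hdim
  have hG := G.finrank_le
  have hH := H.finrank_le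
  omega

theorem stmt_2_general {V : Type*} [NormedAddCommGroup V] [InnerProductSpace ℂ V]
    [FiniteDimensional ℂ V] (g h : V →ₗ[ℂ] V)
    (hg : ∀ x y : V, (inner ℂ (g x) (g y) : ℂ) = inner ℂ x y)
    (hh : ∀ x y : V, (inner ℂ (h x) (h y) : ℂ) = inner ℂ x y)
    (hdisj : (LinearMap.eqLocus g 1)ᗮ ⊓ (LinearMap.eqLocus h 1)ᗮ = ⊥) :
    Module.finrank ℂ V - Module.finrank ℂ (LinearMap.eqLocus (g * h) 1) =
      (Module.finrank ℂ V - Module.finrank ℂ (LinearMap.eqLocus g 1)) +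
      (Module.finrank ℂ V - Module.finrank ℂ (LinearMap.eqLocus h 1)) := by
  have hdisj' := disjoint_iff.mpr hdisj
  rw [eqLocus_mul_one_eq_inf g h hg hh hdisj']
  exact Submodule.finrank_sub_finrank_inf_of_sup_eq_top
    (Submodule.sup_eq_top_of_disjoint_orthogonal hdisj')

/-- For unitary finite-order operators `g, h` on a finite dimensional complex inner
product space, if `(V^g)ᗮ ⊓ (V^h)ᗮ = ⊥` then `codim V^{gh} = codim V^g + codim V^h`. -/
theorem stmt_2 {V : Type*} [NormedAddCommGroup V] [InnerProductSpace ℂ V]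
    [FiniteDimensional ℂ V] (g h : V →ₗ[ℂ] V)
    (hg : ∀ x y : V, (inner ℂ (g x) (g y) : ℂ) = inner ℂ x y)
    (hh : ∀ x y : V, (inner ℂ (h x) (h y) : ℂ) = inner ℂ x y)
    (ng nh : ℕ) (hng : 0 < ng) (hnh : 0 < nh)
    (hgord : g ^ ng = 1) (hhord : h ^ nh = 1)
    (hdisj : (LinearMap.eqLocus g 1)ᗮ ⊓ (LinearMap.eqLocus h 1)ᗮ = ⊥) :
    Module.finrank ℂ V - Module.finrank ℂ (LinearMap.eqLocus (g * h) 1) =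
      (Module.finrank ℂ V - Module.finrank ℂ (LinearMap.eqLocus g 1)) +
      (Module.finrank ℂ V - Module.finrank ℂ (LinearMap.eqLocus h 1)) :=
  stmt_2_general g h hg hh hdisj
end

section
/- Let g be a finite-order linear automorphism of a finite dimensional complex vector space V that is a bireflection, meaning codim V^g = 2, and suppose v_1, v_2 are eigenvectors of g with eigenvalues ε_1 ≠ 1, ε_2 ≠ 1 spanning a complement of V^g, extended to an eigenbasis v_1,…,v_n of g. Write g = s_1 s_2 where s_1 scales v_1 by ε_1 fixing the other basis vectors and s_2 scales v_2 by ε_2 fixing the others. Then for every w ∈ V and every m ≥ 0, the polynomial (w − g·w)(w − s_1·w)·( Σ_{i=1}^{m-1} w^{m-1-i}((s_1·w)^i − (g·w)^i) ) is divisible by v_1 v_2 in S(V), and the quotient by v_1 v_2 is divisible by w − g·w. -/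
/-- Key divisibility lemma for bireflections: `g = s₁s₂` acts on
`S(V) = ℂ[v₀, v₁, …]` as a bireflection with nonidentity eigenvalues `ε₁, ε₂` on
`v₀, v₁` (indices `0` and `1` here play the roles of `v₁, v₂` in the paper).
For every `w ∈ V` (a linear form `w = Σ cᵢ vᵢ`) and every `m ≥ 0`, the polynomial
`(w − g·w)(w − s₁·w)·(Σ_{i=1}^{m-1} w^{m-1-i}((s₁·w)^i − (g·w)^i))`
is divisible by `v₀ v₁`, and the quotient by `v₀ v₁` is divisible by `w − g·w`. -/
theorem stmt_9 {n : ℕ} (ε₁ ε₂ : ℂ) (hε₁ : ε₁ ≠ 1) (hε₂ : ε₂ ≠ 1)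
    (c : Fin (n + 2) → ℂ) (m : ℕ) :
    let s₁ : MvPolynomial (Fin (n + 2)) ℂ →ₐ[ℂ] MvPolynomial (Fin (n + 2)) ℂ :=
      MvPolynomial.aeval (fun i => if i = 0 then MvPolynomial.C ε₁ * MvPolynomial.X 0
        else MvPolynomial.X i)
    let g : MvPolynomial (Fin (n + 2)) ℂ →ₐ[ℂ] MvPolynomial (Fin (n + 2)) ℂ :=
      MvPolynomial.aeval (fun i => if i = 0 then MvPolynomial.C ε₁ * MvPolynomial.X 0
        else if i = 1 then MvPolynomial.C ε₂ * MvPolynomial.X 1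
        else MvPolynomial.X i)
    let w : MvPolynomial (Fin (n + 2)) ℂ := ∑ i, MvPolynomial.C (c i) * MvPolynomial.X i
    ∃ q : MvPolynomial (Fin (n + 2)) ℂ,
      (w - g w) * (w - s₁ w) *
          (∑ i ∈ Finset.Ico 1 m, w ^ (m - 1 - i) * ((s₁ w) ^ i - (g w) ^ i))
        = (MvPolynomial.X 0 * MvPolynomial.X 1) * q ∧ (w - g w) ∣ q := by
  intro s₁ g w
  have h1 : w - s₁ w = MvPolynomial.C (c 0 * (1 - ε₁)) * MvPolynomial.X 0 := by
    simp only [w, s₁, map_sum, map_mul, MvPolynomial.aeval_C, MvPolynomial.aeval_X,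
      ← Finset.sum_sub_distrib]
    rw [Fintype.sum_eq_single 0]
    · simp only [if_true, MvPolynomial.algebraMap_eq, map_mul, map_sub, map_one]; ring
    · intro i hi; simp [hi]
  have h2 : s₁ w - g w = MvPolynomial.C (c 1 * (1 - ε₂)) * MvPolynomial.X 1 := by
    simp only [w, s₁, g, map_sum, map_mul, MvPolynomial.aeval_C, MvPolynomial.aeval_X,
      ← Finset.sum_sub_distrib]
    rw [Fintype.sum_eq_single 1]
    · norm_num [MvPolynomial.algebraMap_eq, map_mul, map_sub, map_one]; ring
    · intro i hi
      by_cases h0 : i = 0 <;> simp [h0, hi]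
  obtain ⟨r, hr⟩ : (s₁ w - g w) ∣
      ∑ i ∈ Finset.Ico 1 m, w ^ (m - 1 - i) * ((s₁ w) ^ i - (g w) ^ i) :=
    Finset.dvd_sum fun i _ => Dvd.dvd.mul_left (sub_dvd_pow_sub_pow _ _ i) _
  refine ⟨MvPolynomial.C (c 0 * (1 - ε₁)) * MvPolynomial.C (c 1 * (1 - ε₂)) *
      ((w - g w) * r), ?_, ?_⟩
  · rw [hr, h1, h2]; ring
  · exact ⟨MvPolynomial.C (c 0 * (1 - ε₁)) * MvPolynomial.C (c 1 * (1 - ε₂)) * r, by ring⟩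
end
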